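/- arXiv:2407.05819 — 8 statements merged into one kernel-verified Lean document; each statement's English description precedes it below -/
import Mathlib

section
/- For the polynomial f = x₀⁷ + x₀³x₁⁴ + x₁⁶x₂ ∈ ℂ[x₀,x₁,x₂], there exist homogeneous triples of degree 3, (a₀,a₁,a₂) and (b₀,b₁,b₂), which are ℂ[x₀,x₁,x₂]-linearly independent and satisfy a₀∂₀f + a₁∂₁f + a₂∂₂f = 0 and b₀∂₀f + b₁∂₁f + b₂∂₂f = 0; in particular mdr(f) ≤ 3 and dim_ℂ Syz(J_f)₃ ≥ 2. -/
open MvPolynomial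

/-- For `f = x₀⁷ + x₀³x₁⁴ + x₁⁶x₂`, there exist two `ℂ[x₀,x₁,x₂]`-linearly independent
Jacobian syzygies whose entries are homogeneous of degree 3; in particular `mdr f ≤ 3`
and `dim Syz(J_f)₃ ≥ 2`. -/
theorem free_septic_two_degree_three_syzygies :
    ∃ a b : Fin 3 → MvPolynomial (Fin 3) ℂ,
      (∀ i, (a i).IsHomogeneous 3) ∧ (∀ i, (b i).IsHomogeneous 3) ∧
      (∑ i : Fin 3, a i *
        pderiv i ((X 0 : MvPolynomial (Fin 3) ℂ) ^ 7 + X 0 ^ 3 * X 1 ^ 4 + X 1 ^ 6 * X 2) = 0) ∧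
      (∑ i : Fin 3, b i *
        pderiv i ((X 0 : MvPolynomial (Fin 3) ℂ) ^ 7 + X 0 ^ 3 * X 1 ^ 4 + X 1 ^ 6 * X 2) = 0) ∧
      LinearIndependent (MvPolynomial (Fin 3) ℂ) ![a, b] := by
  refine ⟨![0, X 1 ^ 3, -(C 4 * X 0 ^ 3 + C 6 * X 1 ^ 2 * X 2)],
          ![C 8 * X 1 ^ 3, C 21 * X 1 ^ 2 * X 2 - C 14 * X 0 ^ 3,
            -(C 126 * X 1 * X 2 ^ 2 + C 24 * X 0 ^ 2 * X 1)], ?_, ?_, ?_, ?_, ?_⟩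
  · intro i
    fin_cases i
    · exact isHomogeneous_zero _ _ _
    · simpa using (isHomogeneous_X ℂ (1 : Fin 3)).pow 3
    · refine (((isHomogeneous_C _ (4 : ℂ)).mul ((isHomogeneous_X ℂ (0 : Fin 3)).pow 3)).add
        (((isHomogeneous_C _ (6 : ℂ)).mul ((isHomogeneous_X ℂ (1 : Fin 3)).pow 2)).mul
          (isHomogeneous_X ℂ (2 : Fin 3)))).neg
  · intro i
    fin_cases i
    · simpa using (isHomogeneous_C _ (8 : ℂ)).mul ((isHomogeneous_X ℂ (1 : Fin 3)).pow 3)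
    · exact (((isHomogeneous_C _ (21 : ℂ)).mul ((isHomogeneous_X ℂ (1 : Fin 3)).pow 2)).mul
        (isHomogeneous_X ℂ (2 : Fin 3))).sub
        ((isHomogeneous_C _ (14 : ℂ)).mul ((isHomogeneous_X ℂ (0 : Fin 3)).pow 3))
    · refine ((((isHomogeneous_C _ (126 : ℂ)).mul (isHomogeneous_X ℂ (1 : Fin 3))).mul
        ((isHomogeneous_X ℂ (2 : Fin 3)).pow 2)).add
        (((isHomogeneous_C _ (24 : ℂ)).mul ((isHomogeneous_X ℂ (0 : Fin 3)).pow 2)).mul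
          (isHomogeneous_X ℂ (1 : Fin 3)))).neg
  · rw [Fin.sum_univ_three]
    simp only [Matrix.cons_val_zero, Matrix.cons_val_one, Matrix.head_cons, Matrix.cons_val_two,
      Matrix.tail_cons]
    simp only [map_add, Derivation.leibniz, Derivation.leibniz_pow, pderiv_X_self,
      pderiv_X_of_ne (by decide : (1:Fin 3) ≠ 0), pderiv_X_of_ne (by decide : (0:Fin 3) ≠ 1),
      pderiv_X_of_ne (by decide : (2:Fin 3) ≠ 0), pderiv_X_of_ne (by decide : (0:Fin 3) ≠ 2),
      pderiv_X_of_ne (by decide : (2:Fin 3) ≠ 1), pderiv_X_of_ne (by decide : (1:Fin 3) ≠ 2),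
      smul_eq_mul, mul_zero, zero_mul, mul_one, add_zero, zero_add, map_ofNat]
    ring
  · rw [Fin.sum_univ_three]
    simp only [Matrix.cons_val_zero, Matrix.cons_val_one, Matrix.head_cons, Matrix.cons_val_two,
      Matrix.tail_cons]
    simp only [map_add, Derivation.leibniz, Derivation.leibniz_pow, pderiv_X_self,
      pderiv_X_of_ne (by decide : (1:Fin 3) ≠ 0), pderiv_X_of_ne (by decide : (0:Fin 3) ≠ 1),
      pderiv_X_of_ne (by decide : (2:Fin 3) ≠ 0), pderiv_X_of_ne (by decide : (0:Fin 3) ≠ 2),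
      pderiv_X_of_ne (by decide : (2:Fin 3) ≠ 1), pderiv_X_of_ne (by decide : (1:Fin 3) ≠ 2),
      smul_eq_mul, mul_zero, zero_mul, mul_one, add_zero, zero_add, map_ofNat]
    ring
  · rw [LinearIndependent.pair_iff]
    intro s t hst
    have h0 := congrFun hst 0
    have h1 := congrFun hst 1
    simp only [Pi.add_apply, Pi.smul_apply, Matrix.cons_val_zero, Matrix.cons_val_one,
      Matrix.head_cons, smul_eq_mul, Pi.zero_apply, mul_zero, zero_add] at h0 h1
    have ht : t = 0 := by
      have : t * (C 8 * X 1 ^ 3) = 0 := by simpa using h0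
      rcases mul_eq_zero.mp this with h | h
      · exact h
      · exfalso
        have : ((C (8:ℂ) * X 1 ^ 3 : MvPolynomial (Fin 3) ℂ)) ≠ 0 := by
          intro hc
          have := congrArg (coeff (Finsupp.single 1 3)) hc
          simp [coeff_C_mul, coeff_X_pow] at this
        exact this h
    subst ht
    refine ⟨?_, rfl⟩
    have h1' : s * X 1 ^ 3 = 0 := by simpa using h1
    rcases mul_eq_zero.mp h1' with h | h
    · exact h
    · exfalso
      have : ((X 1 : MvPolynomial (Fin 3) ℂ) ^ 3) ≠ 0 := pow_ne_zero _ (X_ne_zero 1)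
      exact this h
end

section
/- For the polynomial f = x₀⁷ + x₀⁴x₁³ + x₁⁶x₂ ∈ ℂ[x₀,x₁,x₂], there is no nonzero Jacobian syzygy of degree ≤ 2, i.e., if (a,b,c) are homogeneous of degree ≤ 2 and a∂₀f + b∂₁f + c∂₂f = 0, then a = b = c = 0. Hence mdr(f) = 3 (given that a degree-3 syzygy exists). -/
open MvPolynomial

/-- For `f = x₀⁷ + x₀⁴x₁³ + x₁⁶x₂`, any homogeneous Jacobian syzygy of degree `≤ 2`
is trivial; hence (given that a degree-3 syzygy exists) `mdr f = 3`. -/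
theorem nearly_free_septic_no_low_degree_syzygy
    (t : ℕ) (ht : t ≤ 2) (a b c : MvPolynomial (Fin 3) ℂ)
    (ha : a.IsHomogeneous t) (hb : b.IsHomogeneous t) (hc : c.IsHomogeneous t)
    (hsyz : a * pderiv 0 ((X 0 : MvPolynomial (Fin 3) ℂ) ^ 7 + X 0 ^ 4 * X 1 ^ 3 + X 1 ^ 6 * X 2)
      + b * pderiv 1 ((X 0 : MvPolynomial (Fin 3) ℂ) ^ 7 + X 0 ^ 4 * X 1 ^ 3 + X 1 ^ 6 * X 2)
      + c * pderiv 2 ((X 0 : MvPolynomial (Fin 3) ℂ) ^ 7 + X 0 ^ 4 * X 1 ^ 3 + X 1 ^ 6 * X 2)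
      = 0) :
    a = 0 ∧ b = 0 ∧ c = 0 := by
  have hp0 : pderiv 0 ((X 0 : MvPolynomial (Fin 3) ℂ) ^ 7 + X 0 ^ 4 * X 1 ^ 3 + X 1 ^ 6 * X 2)
      = 7 * X 0 ^ 6 + 4 * X 0 ^ 3 * X 1 ^ 3 := by
    simp [pderiv_X, Pi.single_apply]; ring
  have hp1 : pderiv 1 ((X 0 : MvPolynomial (Fin 3) ℂ) ^ 7 + X 0 ^ 4 * X 1 ^ 3 + X 1 ^ 6 * X 2)
      = 3 * X 0 ^ 4 * X 1 ^ 2 + 6 * X 1 ^ 5 * X 2 := by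
    simp [pderiv_X, Pi.single_apply]; ring
  have hp2 : pderiv 2 ((X 0 : MvPolynomial (Fin 3) ℂ) ^ 7 + X 0 ^ 4 * X 1 ^ 3 + X 1 ^ 6 * X 2)
      = X 1 ^ 6 := by
    simp [pderiv_X, Pi.single_apply]
  rw [hp0, hp1, hp2] at hsyz
  set F := finSuccEquiv ℂ 2 with hF
  set A := F a with hA
  set B := F b with hB
  set Cc := F c with hCc
  have h1 : (X 1 : MvPolynomial (Fin 3) ℂ) = X (Fin.succ 0) := rfl
  have h2 : (X 2 : MvPolynomial (Fin 3) ℂ) = X (Fin.succ 1) := rfl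
  have key := congrArg F hsyz
  rw [h1, h2] at key
  simp only [map_add, map_mul, map_pow, map_ofNat, map_zero, hF,
    finSuccEquiv_X_zero, finSuccEquiv_X_succ] at key
  set u : MvPolynomial (Fin 2) ℂ := X 0 with hu
  set w : MvPolynomial (Fin 2) ℂ := X 1 with hw
  have key2 : A * Polynomial.C 7 * Polynomial.X ^ 6
      + A * Polynomial.C (4 * u ^ 3) * Polynomial.X ^ 3
      + B * Polynomial.C (3 * u ^ 2) * Polynomial.X ^ 4
      + B * Polynomial.C (6 * u ^ 5 * w)
      + Cc * Polynomial.C (u ^ 6) = 0 := by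
    rw [← key]; simp only [Polynomial.C_mul, Polynomial.C_pow, map_ofNat]; ring
  have hune : u ≠ 0 := X_ne_zero 0
  -- degree bounds
  have hdeg : ∀ (p : MvPolynomial (Fin 3) ℂ), p.IsHomogeneous t →
      ∀ k, 2 < k → Polynomial.coeff (F p) k = 0 := by
    intro p hp k hk
    apply Polynomial.coeff_eq_zero_of_natDegree_lt
    calc (F p).natDegree = p.degreeOf 0 := natDegree_finSuccEquiv p
      _ ≤ p.totalDegree := degreeOf_le_totalDegree p 0
      _ ≤ t := hp.totalDegree_le
      _ ≤ 2 := ht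
      _ < k := hk
  have dA := fun k hk => hdeg a ha k hk
  have dB := fun k hk => hdeg b hb k hk
  have dC := fun k hk => hdeg c hc k hk
  rw [← hA] at dA; rw [← hB] at dB; rw [← hCc] at dC
  have e8 := congrArg (fun p => Polynomial.coeff p 8) key2
  simp only [Polynomial.coeff_add, Polynomial.coeff_mul_C, Polynomial.coeff_mul_X_pow',
    Polynomial.coeff_zero] at e8
  norm_num [dA, dB, dC] at e8
  have e7 := congrArg (fun p => Polynomial.coeff p 7) key2
  simp only [Polynomial.coeff_add, Polynomial.coeff_mul_C, Polynomial.coeff_mul_X_pow',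
    Polynomial.coeff_zero] at e7
  norm_num [dA, dB, dC] at e7
  have e6 := congrArg (fun p => Polynomial.coeff p 6) key2
  simp only [Polynomial.coeff_add, Polynomial.coeff_mul_C, Polynomial.coeff_mul_X_pow',
    Polynomial.coeff_zero] at e6
  norm_num [dA, dB, dC] at e6
  have e5 := congrArg (fun p => Polynomial.coeff p 5) key2
  simp only [Polynomial.coeff_add, Polynomial.coeff_mul_C, Polynomial.coeff_mul_X_pow',
    Polynomial.coeff_zero] at e5
  norm_num [dA, dB, dC] at e5
  have e4 := congrArg (fun p => Polynomial.coeff p 4) key2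
  simp only [Polynomial.coeff_add, Polynomial.coeff_mul_C, Polynomial.coeff_mul_X_pow',
    Polynomial.coeff_zero] at e4
  norm_num [dA, dB, dC] at e4
  have e3 := congrArg (fun p => Polynomial.coeff p 3) key2
  simp only [Polynomial.coeff_add, Polynomial.coeff_mul_C, Polynomial.coeff_mul_X_pow',
    Polynomial.coeff_zero] at e3
  norm_num [dA, dB, dC] at e3
  have e2 := congrArg (fun p => Polynomial.coeff p 2) key2
  simp only [Polynomial.coeff_add, Polynomial.coeff_mul_C, Polynomial.coeff_mul_X_pow',
    Polynomial.coeff_zero] at e2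
  norm_num [dA, dB, dC] at e2
  have e1 := congrArg (fun p => Polynomial.coeff p 1) key2
  simp only [Polynomial.coeff_add, Polynomial.coeff_mul_C, Polynomial.coeff_mul_X_pow',
    Polynomial.coeff_zero] at e1
  norm_num [dA, dB, dC] at e1
  have e0 := congrArg (fun p => Polynomial.coeff p 0) key2
  simp only [Polynomial.coeff_add, Polynomial.coeff_mul_C, Polynomial.coeff_mul_X_pow',
    Polynomial.coeff_zero] at e0
  norm_num [dA, dB, dC] at e0
  have ha2 : A.coeff 2 = 0 := e8
  have ha1 : A.coeff 1 = 0 := e7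
  have ha0 : A.coeff 0 = 0 := e3.resolve_right hune
  have h3u : (3 : MvPolynomial (Fin 2) ℂ) * u ^ 2 ≠ 0 := by simp [hune]
  have h6u : (6 : MvPolynomial (Fin 2) ℂ) ≠ 0 := by norm_num
  have hb1 : B.coeff 1 = 0 := by
    rw [ha2, zero_mul, zero_add] at e5
    exact (mul_eq_zero.mp e5).resolve_right h3u
  have hb0 : B.coeff 0 = 0 := by
    rw [ha1, zero_mul, zero_add] at e4
    exact (mul_eq_zero.mp e4).resolve_right h3u
  have hb2 : B.coeff 2 = 0 := by
    rw [ha0, zero_mul, zero_add] at e6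
    exact (mul_eq_zero.mp e6).resolve_right h3u
  have hu6 : u ^ 6 ≠ 0 := pow_ne_zero _ hune
  have hc0 : Cc.coeff 0 = 0 := by
    rw [hb0, zero_mul, zero_add] at e0
    exact (mul_eq_zero.mp e0).resolve_right hu6
  have hc1 : Cc.coeff 1 = 0 := by
    rw [hb1, zero_mul, zero_add] at e1
    exact (mul_eq_zero.mp e1).resolve_right hu6
  have hc2 : Cc.coeff 2 = 0 := by
    rw [hb2, zero_mul, zero_add] at e2
    exact (mul_eq_zero.mp e2).resolve_right hu6
  have zA : A = 0 := Polynomial.ext fun k => by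
    rw [Polynomial.coeff_zero]
    rcases k with _ | _ | _ | k
    exacts [ha0, ha1, ha2, dA (k + 3) (by omega)]
  have zB : B = 0 := Polynomial.ext fun k => by
    rw [Polynomial.coeff_zero]
    rcases k with _ | _ | _ | k
    exacts [hb0, hb1, hb2, dB (k + 3) (by omega)]
  have zC : Cc = 0 := Polynomial.ext fun k => by
    rw [Polynomial.coeff_zero]
    rcases k with _ | _ | _ | k
    exacts [hc0, hc1, hc2, dC (k + 3) (by omega)]
  refine ⟨F.injective ?_, F.injective ?_, F.injective ?_⟩ <;>
    rw [map_zero]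
  · rw [← hA]; exact zA
  · rw [← hB]; exact zB
  · rw [← hCc]; exact zC
end

section
/- Let f = (x₀^d + x₁^d + x₂^d)(x₀^d + x₁^d) with d ≥ 2, and define the 3×2 matrix M with columns (−x₁^{d−1}, x₀^{d−1}, 0)ᵀ and (−x₀x₂^{d−1}, −x₁x₂^{d−1}, 2x₀^d + 2x₁^d + x₂^d)ᵀ (each divided by d). Then both columns of M are Jacobian syzygies of f (i.e., M^T · ∇f = 0), and M has rank ≥ 1 at every point of ℂ³ \ {0}: the six entries of M have no common zero except the origin. -/
open MvPolynomial

/-- For `f = (x₀^d + x₁^d + x₂^d)(x₀^d + x₁^d)` with `d ≥ 2`, the two columns of the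
displayed Hilbert–Burch matrix (each divided by `d`) are Jacobian syzygies of `f`, and
the six entries have no common zero in `ℂ³ ∖ {0}`. -/
theorem free_non_line_arrangement_never_zero_matrix
    (d : ℕ) (hd : 2 ≤ d) :
    (∑ i : Fin 3,
        (C ((d : ℂ))⁻¹ * ![-(X 1 ^ (d - 1)), X 0 ^ (d - 1), 0] i) *
          pderiv i (((X 0 : MvPolynomial (Fin 3) ℂ) ^ d + X 1 ^ d + X 2 ^ d) *
            (X 0 ^ d + X 1 ^ d)) = 0) ∧
    (∑ i : Fin 3,
        (C ((d : ℂ))⁻¹ *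
            ![-(X 0 * X 2 ^ (d - 1)), -(X 1 * X 2 ^ (d - 1)),
              2 * X 0 ^ d + 2 * X 1 ^ d + X 2 ^ d] i) *
          pderiv i (((X 0 : MvPolynomial (Fin 3) ℂ) ^ d + X 1 ^ d + X 2 ^ d) *
            (X 0 ^ d + X 1 ^ d)) = 0) ∧
    (∀ p : Fin 3 → ℂ,
      (∀ i : Fin 3,
          eval p (C ((d : ℂ))⁻¹ * ![-(X 1 ^ (d - 1)), X 0 ^ (d - 1), 0] i) = 0 ∧
          eval p (C ((d : ℂ))⁻¹ *
            ![-(X 0 * X 2 ^ (d - 1)), -(X 1 * X 2 ^ (d - 1)),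
              2 * X 0 ^ d + 2 * X 1 ^ d + X 2 ^ d] i) = 0) → p = 0) := by
  obtain ⟨e, rfl⟩ : ∃ e, d = e + 1 := ⟨d - 1, by omega⟩
  have he : 1 ≤ e := by omega
  have hdC : ((e + 1 : ℕ) : ℂ) ≠ 0 := Nat.cast_ne_zero.mpr (by omega)
  have p01 : pderiv (0 : Fin 3) (X 1 : MvPolynomial (Fin 3) ℂ) = 0 :=
    pderiv_X_of_ne (by decide)
  have p02 : pderiv (0 : Fin 3) (X 2 : MvPolynomial (Fin 3) ℂ) = 0 :=
    pderiv_X_of_ne (by decide)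
  have p10 : pderiv (1 : Fin 3) (X 0 : MvPolynomial (Fin 3) ℂ) = 0 :=
    pderiv_X_of_ne (by decide)
  have p12 : pderiv (1 : Fin 3) (X 2 : MvPolynomial (Fin 3) ℂ) = 0 :=
    pderiv_X_of_ne (by decide)
  have p20 : pderiv (2 : Fin 3) (X 0 : MvPolynomial (Fin 3) ℂ) = 0 :=
    pderiv_X_of_ne (by decide)
  have p21 : pderiv (2 : Fin 3) (X 1 : MvPolynomial (Fin 3) ℂ) = 0 :=
    pderiv_X_of_ne (by decide)
  set f : MvPolynomial (Fin 3) ℂ :=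
    ((X 0 : MvPolynomial (Fin 3) ℂ) ^ (e + 1) + X 1 ^ (e + 1) + X 2 ^ (e + 1)) *
      (X 0 ^ (e + 1) + X 1 ^ (e + 1)) with hf
  set N : MvPolynomial (Fin 3) ℂ := ((e + 1 : ℕ) : MvPolynomial (Fin 3) ℂ) with hN
  have hf0 : pderiv 0 f =
      N * (X 0 ^ e * (2 * X 0 ^ (e + 1) + 2 * X 1 ^ (e + 1) + X 2 ^ (e + 1))) := by
    simp only [hf, hN, pderiv_mul, pderiv_pow, pderiv_X_self, p01, p02, map_add,
      Nat.add_sub_cancel, mul_zero, add_zero, mul_one, zero_add]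
    ring
  have hf1 : pderiv 1 f =
      N * (X 1 ^ e * (2 * X 0 ^ (e + 1) + 2 * X 1 ^ (e + 1) + X 2 ^ (e + 1))) := by
    simp only [hf, hN, pderiv_mul, pderiv_pow, pderiv_X_self, p10, p12, map_add,
      Nat.add_sub_cancel, mul_zero, add_zero, mul_one, zero_add]
    ring
  have hf2 : pderiv 2 f =
      N * (X 2 ^ e * (X 0 ^ (e + 1) + X 1 ^ (e + 1))) := by
    simp only [hf, hN, pderiv_mul, pderiv_pow, pderiv_X_self, p20, p21, map_add,
      Nat.add_sub_cancel, mul_zero, add_zero, mul_one, zero_add]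
    ring
  refine ⟨?_, ?_, ?_⟩
  · simp only [Fin.sum_univ_three, Matrix.cons_val_zero, Matrix.cons_val_one,
      Matrix.head_cons, Matrix.cons_val_two, Matrix.tail_cons, Nat.add_sub_cancel,
      hf0, hf1, hf2]
    ring
  · simp only [Fin.sum_univ_three, Matrix.cons_val_zero, Matrix.cons_val_one,
      Matrix.head_cons, Matrix.cons_val_two, Matrix.tail_cons, Nat.add_sub_cancel,
      hf0, hf1, hf2]
    ring
  · intro p hp
    have h0 := (hp 1).1
    have h1 := (hp 0).1
    have h2 := (hp 2).2
    simp only [Matrix.cons_val_zero, Matrix.cons_val_one, Matrix.head_cons,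
      Matrix.cons_val_two, Matrix.tail_cons, Nat.add_sub_cancel, map_mul, map_neg,
      map_pow, map_add, eval_C, eval_X, map_ofNat, mul_eq_zero, inv_eq_zero,
      neg_eq_zero] at h0 h1 h2
    have hp0 : p 0 = 0 := by
      rcases h0 with h | h
      · exact absurd h hdC
      · exact pow_eq_zero_iff (by omega : e ≠ 0) |>.mp h
    have hp1 : p 1 = 0 := by
      rcases h1 with h | h
      · exact absurd h hdC
      · exact pow_eq_zero_iff (by omega : e ≠ 0) |>.mp h
    have hp2 : p 2 = 0 := by
      rcases h2 with h | h
      · exact absurd h hdC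
      · rw [hp0, hp1] at h
        simp only [zero_pow (by omega : e + 1 ≠ 0), mul_zero, zero_add, add_zero] at h
        exact pow_eq_zero_iff (by omega : e + 1 ≠ 0) |>.mp h
    funext i
    fin_cases i <;> simp [hp0, hp1, hp2]
end

section
/- Let f ∈ ℂ[x₀,x₁,x₂] be a reduced homogeneous polynomial admitting the Jacobian syzygy (0, bx₁, cx₂) with b, c ∈ ℂ nonzero, i.e., bx₁∂₁f + cx₂∂₂f = 0, and suppose ∂₀f = g·x₁ + h·x₂ + ω with g ∈ ℂ[x₀,x₁,x₂], h ∈ ℂ[x₀,x₂], and ω ∈ ℂ[x₀] nonzero, all homogeneous of appropriate degrees. Then h = 0. -/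
/-!
Differentiating the syzygy `b x₁ ∂₁f + c x₂ ∂₂f = 0` in `x₀` and using
`∂₀∂₂f = ∂₂∂₀f = x₁ ∂₂g + (h + x₂ ∂₂h)` shows that `x₁` divides `c x₂ (h + x₂ ∂₂h)`.
That polynomial does not involve `x₁`, so it vanishes, whence `h + x₂ ∂₂h = 0`;
on the coefficient of `x^m` this reads `(1 + m₂) hₘ = 0`, so `h = 0`.
-/

open MvPolynomial

namespace MvPolynomial
variable {σ R : Type*}

theorem pderiv_pderiv_comm [CommRing R] (i j : σ) (p : MvPolynomial σ R) :
    pderiv i (pderiv j p) = pderiv j (pderiv i p) := by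
  classical
  have hbracket :
      ⁅pderiv i, pderiv j⁆ = (0 : Derivation R (MvPolynomial σ R) (MvPolynomial σ R)) :=
    derivation_ext fun k => by
      rw [Derivation.commutator_apply, pderiv_X, pderiv_X]
      by_cases hj : j = k <;> by_cases hi : i = k <;> simp [*]
  simpa [Derivation.commutator_apply, sub_eq_zero] using congr($hbracket p)

section CommSemiring
variable [CommSemiring R]

theorem pderiv_mem_supported {s : Set σ} {p : MvPolynomial σ R} (i : σ)
    (hp : p ∈ supported R s) : pderiv i p ∈ supported R s := by
  classical
  induction hp using Algebra.adjoin_induction with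
  | mem x hx =>
    obtain ⟨j, -, rfl⟩ := hx
    rw [pderiv_X, Pi.single_apply]
    split_ifs <;> simp
  | algebraMap r => simp [algebraMap_eq]
  | add x y _ _ hx hy => rw [map_add]; exact add_mem hx hy
  | mul x y hx' hy' hx hy =>
    rw [pderiv_mul]
    exact add_mem (mul_mem hx hy') (mul_mem hx' hy)

theorem eq_zero_of_X_dvd_of_mem_supported {s : Set σ} {i : σ} {p : MvPolynomial σ R}
    (hi : i ∉ s) (hp : p ∈ supported R s) (hdvd : X i ∣ p) : p = 0 := by
  classical
  obtain ⟨q, rfl⟩ := hdvd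
  by_contra hne
  obtain ⟨m, hm⟩ := support_nonempty.mpr hne
  have hmi : i ∈ m.support := by
    by_contra h
    rw [mem_support_iff, coeff_X_mul', if_neg h] at hm
    exact hm rfl
  exact hi (mem_supported.mp hp ((mem_vars_iff_mem_support i).mpr ⟨m, hm, hmi⟩))

theorem coeff_X_mul_pderiv (i : σ) (m : σ →₀ ℕ) (p : MvPolynomial σ R) :
    coeff m (X i * pderiv i p) = m i • coeff m p := by
  classical
  induction p using MvPolynomial.induction_on' with
  | monomial n a =>
    rw [X_mul_pderiv_monomial, coeff_smul, coeff_monomial]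
    split_ifs with h <;> simp [h]
  | add p q hp hq => simp [mul_add, hp, hq, smul_add]

theorem eq_zero_of_add_X_mul_pderiv_eq_zero [IsAddTorsionFree R] {i : σ} {p : MvPolynomial σ R}
    (hp : p + X i * pderiv i p = 0) : p = 0 := by
  ext m
  have hm : (m i + 1) • coeff m p = (m i + 1) • 0 := by
    simpa [coeff_X_mul_pderiv, add_smul, add_comm] using congr(coeff m $hp)
  exact nsmul_right_injective (Nat.succ_ne_zero _) hm

end CommSemiring
end MvPolynomial

theorem special_linear_syzygy_forces_h_zero_general
    (f : MvPolynomial (Fin 3) ℂ)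
    (b c : ℂ) (hc : c ≠ 0)
    (hsyz : C b * X 1 * pderiv 1 f + C c * X 2 * pderiv 2 f = 0)
    (g h ω : MvPolynomial (Fin 3) ℂ)
    (hhsupp : h ∈ MvPolynomial.supported ℂ ({0, 2} : Set (Fin 3)))
    (hωsupp : ω ∈ MvPolynomial.supported ℂ ({0} : Set (Fin 3)))
    (hdecomp : pderiv 0 f = g * X 1 + h * X 2 + ω) :
    h = 0 := by
  have hω₂ : pderiv 2 ω = 0 :=
    pderiv_eq_zero_of_notMem_vars fun hv => by simpa using mem_supported.mp hωsupp hv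
  have hsyz₀ : C b * X 1 * pderiv 0 (pderiv 1 f) + C c * X 2 * pderiv 0 (pderiv 2 f) = 0 := by
    simpa [pderiv_X, Pi.single_apply] using congr(pderiv 0 $hsyz)
  have hmixed : pderiv 0 (pderiv 2 f) = X 1 * pderiv 2 g + (h + X 2 * pderiv 2 h) := by
    rw [pderiv_pderiv_comm, hdecomp]
    simp [pderiv_X, hω₂]
  have hdvd : X 1 ∣ C c * X 2 * (h + X 2 * pderiv 2 h) :=
    ⟨-(C b * pderiv 0 (pderiv 1 f) + C c * X 2 * pderiv 2 g), by
      linear_combination hsyz₀ - C c * X 2 * hmixed⟩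
  have hmem : C c * X 2 * (h + X 2 * pderiv 2 h) ∈ supported ℂ ({0, 2} : Set (Fin 3)) :=
    mul_mem (mul_mem (algebraMap_mem _ c) (X_mem_supported.mpr (by simp)))
      (add_mem hhsupp (mul_mem (X_mem_supported.mpr (by simp)) (pderiv_mem_supported 2 hhsupp)))
  have hcX : C c * X 2 ≠ (0 : MvPolynomial (Fin 3) ℂ) :=
    mul_ne_zero (C_ne_zero.mpr hc) (X_ne_zero 2)
  exact eq_zero_of_add_X_mul_pderiv_eq_zero
    ((mul_eq_zero.mp (eq_zero_of_X_dvd_of_mem_supported (by decide) hmem hdvd)).resolve_left hcX)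

/-- If a reduced homogeneous `f` of degree `d` admits the Jacobian syzygy `(0,bx₁,cx₂)`
with `b,c ≠ 0`, and `∂₀f = g·x₁ + h·x₂ + ω` with `h ∈ ℂ[x₀,x₂]`, `ω ∈ ℂ[x₀]` nonzero
(all homogeneous of the appropriate degrees), then `h = 0`. -/
theorem special_linear_syzygy_forces_h_zero
    (d : ℕ) (f : MvPolynomial (Fin 3) ℂ)
    (hf : f.IsHomogeneous d) (hred : Squarefree f)
    (b c : ℂ) (hb : b ≠ 0) (hc : c ≠ 0)
    (hsyz : C b * X 1 * pderiv 1 f + C c * X 2 * pderiv 2 f = 0)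
    (g h ω : MvPolynomial (Fin 3) ℂ)
    (hg : g.IsHomogeneous (d - 2)) (hh : h.IsHomogeneous (d - 2))
    (hω : ω.IsHomogeneous (d - 1))
    (hhsupp : h ∈ MvPolynomial.supported ℂ ({0, 2} : Set (Fin 3)))
    (hωsupp : ω ∈ MvPolynomial.supported ℂ ({0} : Set (Fin 3))) (hωne : ω ≠ 0)
    (hdecomp : pderiv 0 f = g * X 1 + h * X 2 + ω) :
    h = 0 :=
  special_linear_syzygy_forces_h_zero_general f b c hc hsyz g h ω hhsupp hωsupp hdecomp
end

section
/- Let a₁,…,a_m be pairwise distinct nonzero complex numbers and f = ∏ᵢ(x₀x₂ + aᵢx₁²) ∈ ℂ[x₀,x₁,x₂]. Then (x₀, 0, −x₂) is a Jacobian syzygy of f: x₀∂₀f − x₂∂₂f = 0. Moreover ∂₁f does not lie in the ideal (x₀, x₂). -/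
open MvPolynomial

theorem Derivation.map_prod_eq_zero {R A M ι : Type*} [CommSemiring R] [CommSemiring A]
    [AddCommMonoid M] [Algebra R A] [Module A M] [Module R M] (D : Derivation R A M)
    (s : Finset ι) (f : ι → A) (h : ∀ i ∈ s, D (f i) = 0) : D (∏ i ∈ s, f i) = 0 := by
  classical
  induction s using Finset.induction_on with
  | empty => simp
  | insert j s hj ih =>
    rw [Finset.prod_insert hj, Derivation.leibniz, h j (Finset.mem_insert_self j s),
      ih fun i hi => h i (Finset.mem_insert_of_mem hi), smul_zero, smul_zero, add_zero]

theorem MvPolynomial.aeval_pderiv_eq_derivative_aeval {R σ : Type*} [CommRing R] (k : σ)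
    (x : σ → Polynomial R) (hk : x k = Polynomial.X)
    (hx : ∀ i ≠ k, Polynomial.derivative (x i) = 0) (p : MvPolynomial σ R) :
    aeval x (pderiv k p) = Polynomial.derivative (aeval x p) := by
  classical
  induction p using MvPolynomial.induction_on with
  | C r => simp
  | add p q hp hq => simp [hp, hq]
  | mul_X p j ih =>
    simp only [Derivation.leibniz, pderiv_X, smul_eq_mul, map_add, map_mul, aeval_X, ih,
      Polynomial.derivative_mul]
    rcases eq_or_ne j k with rfl | hjk
    · simp [hk]; ring
    · simp [hjk, hx j hjk]; ring

theorem conic_arrangement_syzygy_and_partial_general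
    (m : ℕ) (hm : 1 ≤ m) (a : Fin m → ℂ) (ha : ∀ i, a i ≠ 0) :
    (X 0 * pderiv 0 (∏ i : Fin m, ((X 0 : MvPolynomial (Fin 3) ℂ) * X 2 + C (a i) * X 1 ^ 2)) -
        X 2 * pderiv 2 (∏ i : Fin m, ((X 0 : MvPolynomial (Fin 3) ℂ) * X 2 + C (a i) * X 1 ^ 2))
        = 0) ∧
      pderiv 1 (∏ i : Fin m, ((X 0 : MvPolynomial (Fin 3) ℂ) * X 2 + C (a i) * X 1 ^ 2)) ∉
        Ideal.span {(X 0 : MvPolynomial (Fin 3) ℂ), X 2} := by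
  set q : Fin m → MvPolynomial (Fin 3) ℂ := fun i => X 0 * X 2 + C (a i) * X 1 ^ 2
  constructor
  · -- `x₀∂₀ − x₂∂₂` is a derivation killing every factor `x₀x₂ + aᵢx₁²`.
    let D : Derivation ℂ (MvPolynomial (Fin 3) ℂ) (MvPolynomial (Fin 3) ℂ) :=
      (X 0 : MvPolynomial (Fin 3) ℂ) • pderiv 0 - (X 2 : MvPolynomial (Fin 3) ℂ) • pderiv 2
    have hq : ∀ i ∈ Finset.univ, D (q i) = 0 := fun i _ => by
      simp [D, q, pderiv_X]; ring
    simpa [D] using D.map_prod_eq_zero Finset.univ q hq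
  · -- On the line `x₀ = x₂ = 0` the ideal vanishes, while `∂₁f` becomes `2m(∏ aᵢ) t^{2m-1}`.
    let t : Fin 3 → Polynomial ℂ := ![0, Polynomial.X, 0]
    have hspan : Ideal.span {(X 0 : MvPolynomial (Fin 3) ℂ), X 2} ≤ RingHom.ker (aeval t) := by
      simp [Ideal.span_le, Set.insert_subset_iff, t]
    have heval : aeval t (∏ i, q i) = Polynomial.C (∏ i, a i) * Polynomial.X ^ (2 * m) := by
      simp [t, q, Finset.prod_mul_distrib, pow_mul]
    have hne : aeval t (pderiv 1 (∏ i, q i)) ≠ 0 := by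
      have hx : ∀ i ≠ (1 : Fin 3), Polynomial.derivative (t i) = 0 := by
        intro i hi; fin_cases i <;> simp_all [t]
      rw [aeval_pderiv_eq_derivative_aeval 1 t rfl hx, heval, Polynomial.derivative_C_mul_X_pow]
      simp [Finset.prod_ne_zero_iff, ha]
      omega
    exact fun hmem => hne (hspan hmem)

/-- For the conic arrangement `f = ∏ᵢ (x₀x₂ + aᵢx₁²)` with the `aᵢ` nonzero and pairwise
distinct, `(x₀, 0, −x₂)` is a Jacobian syzygy: `x₀∂₀f − x₂∂₂f = 0`; moreover `∂₁f`
does not lie in the ideal `(x₀, x₂)`. -/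
theorem conic_arrangement_syzygy_and_partial
    (m : ℕ) (hm : 1 ≤ m) (a : Fin m → ℂ) (ha : ∀ i, a i ≠ 0)
    (hdist : ∀ i j, i ≠ j → a i ≠ a j) :
    (X 0 * pderiv 0 (∏ i : Fin m, ((X 0 : MvPolynomial (Fin 3) ℂ) * X 2 + C (a i) * X 1 ^ 2)) -
        X 2 * pderiv 2 (∏ i : Fin m, ((X 0 : MvPolynomial (Fin 3) ℂ) * X 2 + C (a i) * X 1 ^ 2))
        = 0) ∧
      pderiv 1 (∏ i : Fin m, ((X 0 : MvPolynomial (Fin 3) ℂ) * X 2 + C (a i) * X 1 ^ 2)) ∉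
        Ideal.span {(X 0 : MvPolynomial (Fin 3) ℂ), X 2} :=
  conic_arrangement_syzygy_and_partial_general m hm a ha
end

section
/- Let C = V(x₀(x₀³x₂ + x₁⁴)) ⊂ ℙ²_ℂ, a quartic with defining polynomial f = x₀⁴x₂ + x₀x₁⁴. The local Milnor number and local Tjurina number of C at p = (0:0:1) are equal: μ_p(C) = τ_p(C) = 13. In particular, the singularity of C at p is quasi-homogeneous. -/
/-!
Write `x = X 0`, `y = X 1` and `J = (4x³ + y⁴, 4xy³)` for the Jacobian ideal of
`g = x⁴ + xy⁴` in `ℂ⟦x, y⟧`. Modulo `J` we have `xy³ ≡ 0`, `y^(j+4) ≡ -4x³yʲ`, and hence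
`x⁴ ≡ 0` and `y⁷ ≡ 0`. Everything outside the box `xⁱyʲ` (`i ≤ 3`, `j ≤ 6`) lies in
`(x⁴, y⁷) ⊆ J`, so the 13 monomials `xⁱyʲ` (`i ≤ 3`, `j ≤ 2`) and `y³` span `ℂ⟦x, y⟧ ⧸ J`.
They are linearly independent because suitably corrected coefficient functionals vanish on `J`
and are dual to them. Since `g = x⁴ + y · xy³ ∈ J`, adding `g` does not change the ideal, so
`τ = μ = 13`.
-/

theorem Ideal.finrank_quotient_eq_card_of_biorthogonal {K A ι : Type*} [Field K] [CommRing A]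
    [Algebra K A] [Fintype ι] [DecidableEq ι] (I : Ideal A) (m : ι → A) (φ : ι → A →ₗ[K] K)
    (hspan : Submodule.span K (Set.range m) ⊔ I.restrictScalars K = ⊤)
    (hI : ∀ i, ∀ a ∈ I, φ i a = 0) (hφ : ∀ i j, φ i (m j) = if i = j then 1 else 0) :
    Module.finrank K (A ⧸ I) = Fintype.card ι := by
  let π := Ideal.Quotient.mkₐ K I
  have hli : LinearIndependent K (π ∘ m) := by
    refine Fintype.linearIndependent_iff.mpr fun c hc i => ?_
    have hmem : ∑ j, c j • m j ∈ I := by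
      refine Ideal.Quotient.eq_zero_iff_mem.mp (?_ : π _ = 0)
      simpa [map_sum] using hc
    calc c i = φ i (∑ j, c j • m j) := by simp [hφ]
      _ = 0 := hI i _ hmem
  have hsp : ⊤ ≤ Submodule.span K (Set.range (π ∘ m)) := by
    rintro q -
    obtain ⟨a, rfl⟩ := Ideal.Quotient.mkₐ_surjective K I q
    obtain ⟨s, hs, t, ht, rfl⟩ := Submodule.mem_sup.mp (hspan ▸ Submodule.mem_top (x := a))
    have hπt : π t = 0 := Ideal.Quotient.eq_zero_iff_mem.mpr ht
    have hπs := Submodule.mem_map_of_mem (f := π.toLinearMap) hs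
    rw [map_add, hπt, add_zero]
    rwa [Submodule.map_span, ← Set.range_comp] at hπs
  rw [Module.finrank_eq_card_basis (Module.Basis.mk hli hsp)]

open MvPowerSeries in
theorem MvPowerSeries.sub_trunc'_mem_span_X_pow {R : Type*} [CommRing R]
    (n : Fin 2 →₀ ℕ) (f : MvPowerSeries (Fin 2) R) :
    f - trunc' R n f ∈ Ideal.span {X 0 ^ (n 0 + 1), X 1 ^ (n 1 + 1)} := by
  set g := f - (trunc' R n f : MvPowerSeries (Fin 2) R)
  have hg : ∀ d, d 0 ≤ n 0 → d 1 ≤ n 1 → coeff d g = 0 := by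
    intro d h0 h1
    have hdn : d ≤ n := Finsupp.le_def.mpr (Fin.forall_fin_two.mpr ⟨h0, h1⟩)
    simp [g, coeff_trunc', hdn]
  let g₁ : MvPowerSeries (Fin 2) R := fun d => if d 0 ≤ n 0 then coeff d g else 0
  have hg₁ : ∀ d, coeff d g₁ = if d 0 ≤ n 0 then coeff d g else 0 := fun _ => rfl
  obtain ⟨a, ha⟩ : X 0 ^ (n 0 + 1) ∣ g - g₁ := X_pow_dvd_iff.mpr fun d hd => by
    simp [hg₁, Nat.le_of_lt_succ hd]
  obtain ⟨b, hb⟩ : X 1 ^ (n 1 + 1) ∣ g₁ := X_pow_dvd_iff.mpr fun d hd => by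
    rw [hg₁]
    split_ifs with h0
    · exact hg d h0 (Nat.le_of_lt_succ hd)
    · rfl
  exact Ideal.mem_span_pair.mpr ⟨a, b, by rw [mul_comm a, mul_comm b, ← ha, ← hb, sub_add_cancel]⟩

@[simp, norm_cast]
lemma MvPolynomial.coe_ofNat {σ R : Type*} [CommSemiring R] (n : ℕ) [n.AtLeastTwo] :
    ((ofNat(n) : MvPolynomial σ R) : MvPowerSeries σ R) = ofNat(n) :=
  map_ofNat MvPolynomial.coeToMvPowerSeries.ringHom n

namespace QuarticW13

open MvPowerSeries

local notation "R₂" => MvPowerSeries (Fin 2) ℂ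

noncomputable section

def exponent (p : ℕ × ℕ) : Fin 2 →₀ ℕ := Finsupp.single 0 p.1 + Finsupp.single 1 p.2

@[simp] lemma exponent_apply_zero (p : ℕ × ℕ) : exponent p 0 = p.1 := by simp [exponent]

@[simp] lemma exponent_apply_one (p : ℕ × ℕ) : exponent p 1 = p.2 := by simp [exponent]

lemma exponent_eta (d : Fin 2 →₀ ℕ) : exponent (d 0, d 1) = d := by
  ext i; fin_cases i <;> simp

lemma exponent_injective : Function.Injective exponent := fun p q h => by
  simpa [Prod.ext_iff] using (⟨congr($h 0), congr($h 1)⟩ : _ ∧ _)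

lemma exponent_le_exponent_iff {p q : ℕ × ℕ} : exponent p ≤ exponent q ↔ p ≤ q := by
  simp [Finsupp.le_def, Fin.forall_fin_two, Prod.le_def]

lemma exponent_sub (p q : ℕ × ℕ) : exponent q - exponent p = exponent (q - p) := by
  ext i; fin_cases i <;> simp

def mono (p : ℕ × ℕ) : R₂ := X 0 ^ p.1 * X 1 ^ p.2

lemma mono_eq_monomial (p : ℕ × ℕ) : mono p = monomial (exponent p) 1 := by
  rw [mono, X_pow_eq, X_pow_eq, monomial_mul_monomial, one_mul, exponent]

lemma monomial_eq_smul_mono (p : ℕ × ℕ) (c : ℂ) : monomial (exponent p) c = c • mono p := by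
  rw [mono_eq_monomial, ← map_smul, smul_eq_mul, mul_one]

lemma mono_mul_mono (p q : ℕ × ℕ) : mono p * mono q = mono (p + q) := by
  simp only [mono, Prod.fst_add, Prod.snd_add]
  ring

lemma coeff_mono (p q : ℕ × ℕ) : coeff (exponent q) (mono p) = if p = q then 1 else 0 := by
  simp only [mono_eq_monomial, coeff_monomial, exponent_injective.eq_iff, eq_comm]

lemma coeff_mul_mono (u : R₂) (p q : ℕ × ℕ) :
    coeff (exponent q) (u * mono p) = if p ≤ q then coeff (exponent (q - p)) u else 0 := by
  simp only [mono_eq_monomial, coeff_mul_monomial, exponent_le_exponent_iff, exponent_sub,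
    mul_one]

lemma coeff_four_mul (u : R₂) (d : Fin 2 →₀ ℕ) : coeff d (4 * u) = 4 * coeff d u := by
  rw [← map_ofNat C 4, coeff_C_mul]

lemma isUnit_four : IsUnit (4 : R₂) := by
  rw [← map_ofNat C 4]
  exact (Ne.isUnit (by norm_num : (4 : ℂ) ≠ 0)).map C

def jacobianIdeal : Ideal R₂ := Ideal.span {4 * X 0 ^ 3 + X 1 ^ 4, 4 * X 0 * X 1 ^ 3}

lemma mono_one_three_mem : mono (1, 3) ∈ jacobianIdeal :=
  (Ideal.unit_mul_mem_iff_mem _ isUnit_four).mp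
    (Ideal.subset_span (by simp [mono, mul_assoc]))

lemma mono_zero_add_four_add_mem (k : ℕ) :
    mono (0, k + 4) + 4 * mono (3, k) ∈ jacobianIdeal := by
  have h : mono (0, k + 4) + 4 * mono (3, k) = mono (0, k) * (4 * X 0 ^ 3 + X 1 ^ 4) := by
    simp only [mono]
    ring
  rw [h]
  exact Ideal.mul_mem_left _ _ (Ideal.subset_span (by simp))

lemma mono_mem_of_le {p q : ℕ × ℕ} (hpq : p ≤ q) (hp : mono p ∈ jacobianIdeal) :
    mono q ∈ jacobianIdeal := by
  obtain ⟨r, rfl⟩ := exists_add_of_le hpq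
  rw [← mono_mul_mono]
  exact Ideal.mul_mem_right _ _ hp

lemma mono_four_zero_mem : mono (4, 0) ∈ jacobianIdeal := by
  refine (Ideal.unit_mul_mem_iff_mem _ isUnit_four).mp ?_
  have h : 4 * mono (4, 0) =
      mono (1, 0) * (mono (0, 4) + 4 * mono (3, 0)) - mono (0, 1) * mono (1, 3) := by
    simp only [mono]
    ring
  rw [h]
  exact sub_mem (Ideal.mul_mem_left _ _ (mono_zero_add_four_add_mem 0))
    (Ideal.mul_mem_left _ _ mono_one_three_mem)

lemma mono_zero_seven_mem : mono (0, 7) ∈ jacobianIdeal := by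
  have h : mono (0, 7) = (mono (0, 3 + 4) + 4 * mono (3, 3)) - 4 * mono (2, 0) * mono (1, 3) := by
    simp only [mono]
    ring
  rw [h]
  exact sub_mem (mono_zero_add_four_add_mem 3) (Ideal.mul_mem_left _ _ mono_one_three_mem)

def staircase : Finset (ℕ × ℕ) := Finset.range 4 ×ˢ Finset.range 3 ∪ {(0, 3)}

lemma card_staircase : staircase.card = 13 := rfl

lemma mono_mem_span_sup {p : ℕ × ℕ} (hp : p ≤ (3, 6)) :
    mono p ∈ Submodule.span ℂ (mono '' staircase) ⊔ jacobianIdeal.restrictScalars ℂ := by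
  by_cases hs : p ∈ staircase
  · exact Submodule.mem_sup_left (Submodule.subset_span ⟨p, hs, rfl⟩)
  by_cases h13 : (1, 3) ≤ p
  · exact Submodule.mem_sup_right (mono_mem_of_le h13 mono_one_three_mem)
  obtain ⟨k, hk, rfl⟩ : ∃ k ≤ 2, p = (0, k + 4) := by
    obtain ⟨i, j⟩ := p
    simp only [staircase, Finset.mem_union, Finset.mem_product, Finset.mem_range,
      Finset.mem_singleton, Prod.mk.injEq, Prod.mk_le_mk] at hp hs h13
    exact ⟨j - 4, by omega, by simp only [Prod.mk.injEq]; omega⟩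
  have hreduce : mono (0, k + 4) =
      (mono (0, k + 4) + 4 * mono (3, k)) - (4 : ℂ) • mono (3, k) := by
    rw [Algebra.smul_def, map_ofNat, add_sub_cancel_right]
  rw [hreduce]
  refine sub_mem (Submodule.mem_sup_right (mono_zero_add_four_add_mem k))
    (Submodule.smul_mem _ _ (Submodule.mem_sup_left (Submodule.subset_span ⟨_, ?_, rfl⟩)))
  simp [staircase]
  omega

lemma span_sup_jacobianIdeal_eq_top :
    Submodule.span ℂ (mono '' staircase) ⊔ jacobianIdeal.restrictScalars ℂ = ⊤ := by
  refine Submodule.eq_top_iff'.mpr fun f => ?_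
  have htail : f - trunc' ℂ (exponent (3, 6)) f ∈ jacobianIdeal := by
    refine Ideal.span_le.mpr ?_ (sub_trunc'_mem_span_X_pow _ f)
    simp only [exponent_apply_zero, exponent_apply_one, Nat.reduceAdd, Set.insert_subset_iff,
      Set.singleton_subset_iff]
    exact ⟨by simpa [mono] using mono_four_zero_mem, by simpa [mono] using mono_zero_seven_mem⟩
  have hhead : (trunc' ℂ (exponent (3, 6)) f : R₂) ∈
      Submodule.span ℂ (mono '' staircase) ⊔ jacobianIdeal.restrictScalars ℂ := by
    change ((∑ d ∈ Finset.Iic (exponent (3, 6)), MvPolynomial.monomial d (coeff d f) :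
      MvPolynomial (Fin 2) ℂ) : R₂) ∈ _
    rw [← MvPolynomial.coeToMvPowerSeries.ringHom_apply, map_sum]
    refine Submodule.sum_mem _ fun d hd => ?_
    rw [MvPolynomial.coeToMvPowerSeries.ringHom_apply, MvPolynomial.coe_monomial]
    rw [Finset.mem_Iic, ← exponent_eta d, exponent_le_exponent_iff] at hd
    rw [← exponent_eta d, monomial_eq_smul_mono]
    exact Submodule.smul_mem _ _ (mono_mem_span_sup hd)
  simpa using add_mem hhead (Submodule.mem_sup_right htail)

/-- Modulo `jacobianIdeal`, `y ^ (j + 4) ≡ -4 x³ yʲ`: the coefficient of `x³ yʲ` is corrected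
by that of `y ^ (j + 4)` so that the functional vanishes on `jacobianIdeal`. -/
def dualCoeff (p : ℕ × ℕ) : R₂ →ₗ[ℂ] ℂ :=
  coeff (exponent p) - if p.1 = 3 then 4 • coeff (exponent (0, p.2 + 4)) else 0

lemma dualCoeff_apply (p : ℕ × ℕ) (a : R₂) : dualCoeff p a =
    coeff (exponent p) a - if p.1 = 3 then 4 * coeff (exponent (0, p.2 + 4)) a else 0 := by
  unfold dualCoeff
  split_ifs <;> simp

lemma dualCoeff_mono (p : ℕ × ℕ) {q : ℕ × ℕ} (hq : q ∈ staircase) :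
    dualCoeff p (mono q) = if p = q then 1 else 0 := by
  have hq' : q ≠ (0, p.2 + 4) := by
    rintro rfl
    simp [staircase] at hq
    omega
  simp [dualCoeff_apply, coeff_mono, hq', eq_comm]

lemma dualCoeff_eq_zero_of_mem {p : ℕ × ℕ} (hp : p ∈ staircase) {a : R₂}
    (ha : a ∈ jacobianIdeal) : dualCoeff p a = 0 := by
  obtain ⟨u, w, rfl⟩ := Ideal.mem_span_pair.mp ha
  have h₀ : (4 * X 0 ^ 3 + X 1 ^ 4 : R₂) = 4 * mono (3, 0) + mono (0, 4) := by simp [mono]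
  have h₁ : (4 * X 0 * X 1 ^ 3 : R₂) = 4 * mono (1, 3) := by simp [mono, mul_assoc]
  rw [h₀, h₁]
  simp only [mul_add, mul_left_comm u 4, mul_left_comm w 4, map_add, coeff_four_mul,
    coeff_mul_mono, dualCoeff_apply]
  obtain ⟨i, j⟩ := p
  simp only [staircase, Finset.mem_union, Finset.mem_product, Finset.mem_range,
    Finset.mem_singleton, Prod.mk.injEq] at hp
  rcases hp with ⟨hi, hj⟩ | ⟨rfl, rfl⟩
  · interval_cases i <;> interval_cases j <;> simp [Prod.le_def]
  · simp [Prod.le_def]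

theorem finrank_quotient_jacobianIdeal : Module.finrank ℂ (R₂ ⧸ jacobianIdeal) = 13 := by
  rw [Ideal.finrank_quotient_eq_card_of_biorthogonal jacobianIdeal (fun p : staircase => mono p)
    (fun p => dualCoeff p), Fintype.card_coe, card_staircase]
  · simpa [Set.image_eq_range] using span_sup_jacobianIdeal_eq_top
  · exact fun p a ha => dualCoeff_eq_zero_of_mem p.2 ha
  · intro p q
    simp only [dualCoeff_mono _ q.2, Subtype.ext_iff]

lemma localEquation_mem : (X 0 ^ 4 + X 0 * X 1 ^ 4 : R₂) ∈ jacobianIdeal := by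
  have h : (X 0 ^ 4 + X 0 * X 1 ^ 4 : R₂) = mono (4, 0) + mono (0, 1) * mono (1, 3) := by
    simp only [mono]
    ring
  rw [h]
  exact add_mem mono_four_zero_mem (Ideal.mul_mem_left _ _ mono_one_three_mem)

lemma span_insert_localEquation :
    Ideal.span {4 * X 0 ^ 3 + X 1 ^ 4, 4 * X 0 * X 1 ^ 3, X 0 ^ 4 + X 0 * X 1 ^ 4} =
      jacobianIdeal := by
  rw [Set.pair_comm, Set.insert_comm]
  exact Submodule.span_insert_eq_span localEquation_mem

end

end QuarticW13

open MvPolynomial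

namespace QuarticW13

local notation "R₂" => MvPowerSeries (Fin 2) ℂ

lemma coe_pderiv_zero :
    ((pderiv 0 (X 0 ^ 4 + X 0 * X 1 ^ 4) : MvPolynomial (Fin 2) ℂ) : R₂) =
      4 * MvPowerSeries.X 0 ^ 3 + MvPowerSeries.X 1 ^ 4 := by
  simp [pderiv_X]

lemma coe_pderiv_one :
    ((pderiv 1 (X 0 ^ 4 + X 0 * X 1 ^ 4) : MvPolynomial (Fin 2) ℂ) : R₂) =
      4 * MvPowerSeries.X 0 * MvPowerSeries.X 1 ^ 3 := by
  simp [pderiv_X]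
  ring

lemma coe_localEquation :
    ((X 0 ^ 4 + X 0 * X 1 ^ 4 : MvPolynomial (Fin 2) ℂ) : R₂) =
      MvPowerSeries.X 0 ^ 4 + MvPowerSeries.X 0 * MvPowerSeries.X 1 ^ 4 := by
  simp

end QuarticW13

/-- For the quartic `C = V(x₀(x₀³x₂ + x₁⁴))`, with local equation `g = x₀⁴ + x₀x₁⁴`
at `p = (0:0:1)`, the local Milnor and Tjurina numbers both equal 13; in particular
the singularity at `p` is quasi-homogeneous. -/
theorem quartic_W13_quasi_homogeneous :
    (Module.finrank ℂ (MvPowerSeries (Fin 2) ℂ ⧸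
        Ideal.span {((pderiv 0 ((X 0 : MvPolynomial (Fin 2) ℂ) ^ 4 + X 0 * X 1 ^ 4) :
            MvPolynomial (Fin 2) ℂ) : MvPowerSeries (Fin 2) ℂ),
          ((pderiv 1 ((X 0 : MvPolynomial (Fin 2) ℂ) ^ 4 + X 0 * X 1 ^ 4) :
            MvPolynomial (Fin 2) ℂ) : MvPowerSeries (Fin 2) ℂ)}) = 13) ∧
    (Module.finrank ℂ (MvPowerSeries (Fin 2) ℂ ⧸
        Ideal.span {((pderiv 0 ((X 0 : MvPolynomial (Fin 2) ℂ) ^ 4 + X 0 * X 1 ^ 4) :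
            MvPolynomial (Fin 2) ℂ) : MvPowerSeries (Fin 2) ℂ),
          ((pderiv 1 ((X 0 : MvPolynomial (Fin 2) ℂ) ^ 4 + X 0 * X 1 ^ 4) :
            MvPolynomial (Fin 2) ℂ) : MvPowerSeries (Fin 2) ℂ),
          (((X 0 : MvPolynomial (Fin 2) ℂ) ^ 4 + X 0 * X 1 ^ 4 :
            MvPolynomial (Fin 2) ℂ) : MvPowerSeries (Fin 2) ℂ)}) = 13) := by
  rw [QuarticW13.coe_pderiv_zero, QuarticW13.coe_pderiv_one, QuarticW13.coe_localEquation,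
    QuarticW13.span_insert_localEquation]
  exact ⟨QuarticW13.finrank_quotient_jacobianIdeal, QuarticW13.finrank_quotient_jacobianIdeal⟩
end

section
/- Let d = 2k+1 with k ≥ 2 odd, and f = x₀^d + (x₀² + x₁²)^k x₂ ∈ ℂ[x₀,x₁,x₂]. Then the triple (0, x₀²+x₁², −2k x₁ x₂) is a Jacobian syzygy of f: (x₀²+x₁²)∂₁f − 2k x₁x₂ ∂₂f = 0. Moreover every entry of the first column of this syzygy, namely 0, x₀²+x₁², −2k x₁x₂, vanishes at the point (0,0,1). -/
open MvPolynomial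

/-- For `f = x₀^d + (x₀²+x₁²)^k x₂` with `d = 2k+1`, `k ≥ 2` odd, the triple
`(0, x₀²+x₁², −2k·x₁x₂)` is a Jacobian syzygy of `f`, and each of its entries
vanishes at the point `(0,0,1)`. -/
theorem three_syzygy_curve_vanishing_syzygy
    (k : ℕ) (hk : 2 ≤ k) (hodd : Odd k) :
    ((X 0 ^ 2 + X 1 ^ 2) *
        pderiv 1 ((X 0 : MvPolynomial (Fin 3) ℂ) ^ (2 * k + 1) + (X 0 ^ 2 + X 1 ^ 2) ^ k * X 2) -
      (2 * k : MvPolynomial (Fin 3) ℂ) * X 1 * X 2 *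
        pderiv 2 ((X 0 : MvPolynomial (Fin 3) ℂ) ^ (2 * k + 1) + (X 0 ^ 2 + X 1 ^ 2) ^ k * X 2)
      = 0) ∧
    eval (![0, 0, 1] : Fin 3 → ℂ) ((0 : MvPolynomial (Fin 3) ℂ)) = 0 ∧
    eval (![0, 0, 1] : Fin 3 → ℂ) ((X 0 : MvPolynomial (Fin 3) ℂ) ^ 2 + X 1 ^ 2) = 0 ∧
    eval (![0, 0, 1] : Fin 3 → ℂ)
      (-((2 * k : MvPolynomial (Fin 3) ℂ) * X 1 * X 2)) = 0 := by
  obtain ⟨m, rfl⟩ := Nat.exists_eq_add_of_le hk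
  refine ⟨?_, by simp, by simp, by simp⟩
  simp only [map_add, map_mul, map_pow, pderiv_X, pderiv_pow, Derivation.leibniz,
    smul_eq_mul, Pi.single_eq_of_ne (by decide : (0:Fin 3) ≠ 1),
    Pi.single_eq_of_ne (by decide : (0:Fin 3) ≠ 2),
    Pi.single_eq_of_ne (by decide : (1:Fin 3) ≠ 2),
    Pi.single_eq_of_ne (by decide : (1:Fin 3) ≠ 0),
    Pi.single_eq_of_ne (by decide : (2:Fin 3) ≠ 0),
    Pi.single_eq_of_ne (by decide : (2:Fin 3) ≠ 1),
    Pi.single_eq_same]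
  push_cast
  rw [show 2 + m - 1 = m + 1 by omega]
  ring
end

section
/- Let M be the 3×3 matrix over ℂ[x₀,x₁,x₂] with rows (0, −∂₁f, −∂₂f), (bx₁, ω, 0), (cx₂, −(c/b)·g·x₂, ∂₀f), where f is reduced homogeneous of degree d, b,c ∈ ℂ are nonzero with bx₁∂₁f + cx₂∂₂f = 0, and ∂₀f = g·x₁ + ω with g homogeneous of degree d−2 and ω ∈ ℂ[x₀] of degree d−1, ω ≠ 0. Then each column of M is a Jacobian syzygy of f, i.e., M^T · ∇f = 0, and the column vector (ω, −bx₁, −cx₂)ᵀ is a syzygy of the columns of M, i.e., M · (ω, −bx₁, −cx₂)ᵀ = 0. -/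
open MvPolynomial

/-- First and second syzygy matrices of a nearly free curve with the special linear
Jacobian syzygy `(0, bx₁, cx₂)`: the columns of the displayed matrix `M` are Jacobian
syzygies of `f` (`Mᵀ·∇f = 0`), and `(ω, −bx₁, −cx₂)ᵀ` is a syzygy of the columns of `M`
(`M·(ω, −bx₁, −cx₂)ᵀ = 0`). -/
theorem nearly_free_first_and_second_syzygy
    (d : ℕ) (f : MvPolynomial (Fin 3) ℂ)
    (hf : f.IsHomogeneous d) (hred : Squarefree f)
    (b c : ℂ) (hb : b ≠ 0) (hc : c ≠ 0)
    (hsyz : C b * X 1 * pderiv 1 f + C c * X 2 * pderiv 2 f = 0)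
    (g ω : MvPolynomial (Fin 3) ℂ)
    (hg : g.IsHomogeneous (d - 2))
    (hω : ω.IsHomogeneous (d - 1)) (hωsupp : ω ∈ MvPolynomial.supported ℂ ({0} : Set (Fin 3)))
    (hωne : ω ≠ 0)
    (hdecomp : pderiv 0 f = g * X 1 + ω) :
    (∀ j : Fin 3,
      ∑ i : Fin 3,
        (Matrix.of ![![0, -pderiv 1 f, -pderiv 2 f],
            ![C b * X 1, ω, 0],
            ![C c * X 2, -(C (c / b)) * g * X 2, pderiv 0 f]]) i j * pderiv i f = 0) ∧
    (∀ i : Fin 3,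
      ∑ j : Fin 3,
        (Matrix.of ![![0, -pderiv 1 f, -pderiv 2 f],
            ![C b * X 1, ω, 0],
            ![C c * X 2, -(C (c / b)) * g * X 2, pderiv 0 f]]) i j *
          (![ω, -(C b * X 1), -(C c * X 2)] j) = 0) := by
  have hb' : (C b : MvPolynomial (Fin 3) ℂ) ≠ 0 := by
    simpa using hb
  have hcb : (C (c / b) : MvPolynomial (Fin 3) ℂ) * C b = C c := by
    rw [← C_mul, div_mul_cancel₀ _ hb]
  constructor
  · intro j
    fin_cases j <;>
      simp only [Fin.sum_univ_three, Matrix.of_apply, Matrix.cons_val', Matrix.cons_val_zero,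
        Matrix.cons_val_one, Matrix.head_cons, Matrix.head_fin_const, Matrix.cons_val_fin_one,
        Matrix.empty_val', Fin.mk_zero, Fin.mk_one, show (⟨2, by norm_num⟩ : Fin 3) = 2 from rfl,
        Matrix.cons_val_two, Matrix.tail_cons, Fin.isValue]
    · linear_combination hsyz
    · apply mul_left_cancel₀ hb'
      rw [hdecomp]
      linear_combination (-g) * hsyz - (g * X 2 * pderiv 2 f) * hcb
    · ring
  · intro i
    fin_cases i <;>
      simp only [Fin.sum_univ_three, Matrix.of_apply, Matrix.cons_val', Matrix.cons_val_zero,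
        Matrix.cons_val_one, Matrix.head_cons, Matrix.head_fin_const, Matrix.cons_val_fin_one,
        Matrix.empty_val', Fin.mk_zero, Fin.mk_one, show (⟨2, by norm_num⟩ : Fin 3) = 2 from rfl,
        Matrix.cons_val_two, Matrix.tail_cons, Fin.isValue]
    · linear_combination hsyz
    · ring
    · linear_combination (g * X 2 * X 1) * hcb + (-(C c * X 2)) * hdecomp
end
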